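/- arXiv:2407.14913 — 14 statements merged into one kernel-verified Lean document; each statement's English description precedes it below -/
import Mathlib

section
/- Let A be a finite-dimensional vector space over a field K of characteristic zero, equipped with a bilinear product •, a nondegenerate skew-symmetric bilinear form ω, and the bilinear product ⋆ determined by ω(u⋆v, w) = −ω(v, u•w) for all u,v,w ∈ A. Assume that u⋆v − v⋆u = (1/2)(u•v − v•u) for all u,v ∈ A. Then • satisfies the left Leibniz identity u•(v•w) = (u•v)•w + v•(u•w) for all u,v,w ∈ A if and only if ⋆ is left symmetric and (u•v + v•u)•w = 0 for all u,v,w ∈ A. -/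
/-- For an algebra `(A, •)` with a nondegenerate skew-symmetric bilinear
form `ω` and the product `⋆` determined by `ω(u⋆v, w) = −ω(v, u•w)`, assuming
`u⋆v − v⋆u = (1/2)(u•v − v•u)`, the product `•` is left Leibniz iff `⋆` is left
symmetric and `(u•v + v•u)•w = 0` for all `u,v,w`. -/
theorem stmt0 {K A : Type*} [Field K] [CharZero K] [AddCommGroup A] [Module K A]
    [FiniteDimensional K A]
    (mul star : A →ₗ[K] A →ₗ[K] A) (ω : A →ₗ[K] A →ₗ[K] K)
    (hskew : ∀ u v : A, ω u v = - ω v u)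
    (hnondeg : ∀ u : A, (∀ v : A, ω u v = 0) → u = 0)
    (hstar : ∀ u v w : A, ω (star u v) w = - ω v (mul u w))
    (hrel : ∀ u v : A, star u v - star v u = (1/2 : K) • (mul u v - mul v u)) :
    (∀ u v w : A, mul u (mul v w) = mul (mul u v) w + mul v (mul u w)) ↔
      ((∀ u v w : A, star (star u v) w - star u (star v w)
          = star (star v u) w - star v (star u w)) ∧
        (∀ u v w : A, mul (mul u v + mul v u) w = 0)) := by
  -- scalar computation
  have calc1 : ∀ u v w z : A,
      ω (star (star u v) w - star u (star v w) - (star (star v u) w - star v (star u w))) z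
      = ω w (mul u (mul v z) - mul v (mul u z) - (1/2:K) • mul (mul u v - mul v u) z) := by
    intro u v w z
    have h1 := hstar (star u v) w z
    have h2 := hstar (star v u) w z
    have h3 := hstar u (star v w) z
    have h3' := hstar v w (mul u z)
    have h4 := hstar v (star u w) z
    have h4' := hstar u w (mul v z)
    have hmul := congrArg (fun x => ω w (mul x z)) (hrel u v)
    simp only [map_sub, LinearMap.sub_apply, map_smul, LinearMap.smul_apply, smul_eq_mul] at *
    linear_combination h1 - h2 - h3 + h3' + h4 - h4' - hmul
  have key : (∀ u v w : A, star (star u v) w - star u (star v w)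
          = star (star v u) w - star v (star u w)) ↔
      (∀ u v z : A, mul u (mul v z) - mul v (mul u z) = (1/2:K) • mul (mul u v - mul v u) z) := by
    constructor
    · intro h u v z
      rw [← sub_eq_zero]
      apply hnondeg
      intro w
      rw [hskew]
      have := calc1 u v w z
      rw [sub_eq_zero.mpr (h u v w), map_zero, LinearMap.zero_apply] at this
      rw [← this]; ring
    · intro h u v w
      rw [← sub_eq_zero]
      apply hnondeg
      intro z
      rw [calc1 u v w z, sub_eq_zero.mpr (h u v z), map_zero]
  rw [key]
  constructor
  · intro hL
    constructor
    · intro u v z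
      have a := hL u v z
      have b := hL v u z
      have : mul u (mul v z) - mul v (mul u z) = mul (mul u v) z := by
        rw [a]; abel
      have hb : mul (mul v u) z = -(mul (mul u v) z) := by
        rw [← this]; rw [b]; abel
      rw [map_sub, LinearMap.sub_apply, hb, this, sub_neg_eq_add, ← two_smul K,
        smul_smul]
      norm_num
    · intro u v w
      have a := hL u v w
      have b := hL v u w
      rw [map_add, LinearMap.add_apply]
      have ha : mul (mul u v) w = mul u (mul v w) - mul v (mul u w) := by rw [a]; abel
      have hb : mul (mul v u) w = mul v (mul u w) - mul u (mul v w) := by rw [b]; abel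
      rw [ha, hb]; abel
  · rintro ⟨h1, h2⟩ u v w
    have h3 := h1 u v w
    have h4 := h2 u v w
    rw [map_add, LinearMap.add_apply, add_eq_zero_iff_eq_neg] at h4
    rw [map_sub, LinearMap.sub_apply, h4] at h3
    have h5 : (1/2:K) • (-(mul (mul v u)) w - (mul (mul v u)) w) = -((mul ((mul v) u)) w) := by
      rw [sub_eq_add_neg, ← neg_add, ← two_smul K, smul_neg, smul_smul]
      norm_num
    rw [h5] at h3
    rw [h4, ← h3]
    abel
end

section
/- Let A be a finite-dimensional vector space over a field K of characteristic zero, equipped with a bilinear product •, a nondegenerate skew-symmetric bilinear form ω, and the bilinear product ⋆ determined by ω(u⋆v, w) = −ω(v, w•u) for all u,v,w ∈ A. Assume that u⋆v − v⋆u = −(1/2)(u•v − v•u) for all u,v ∈ A. Then • satisfies the right Leibniz identity (v•w)•u = (v•u)•w + v•(w•u) for all u,v,w ∈ A if and only if ⋆ is left symmetric and w•(u•v + v•u) = 0 for all u,v,w ∈ A. -/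
/-- For an algebra `(A, •)` with a nondegenerate skew-symmetric bilinear
form `ω` and the product `⋆` determined by `ω(u⋆v, w) = −ω(v, w•u)`, assuming
`u⋆v − v⋆u = −(1/2)(u•v − v•u)`, the product `•` is right Leibniz iff `⋆` is left
symmetric and `w•(u•v + v•u) = 0` for all `u,v,w`. -/
theorem stmt1 {K A : Type*} [Field K] [CharZero K] [AddCommGroup A] [Module K A]
    [FiniteDimensional K A]
    (mul star : A →ₗ[K] A →ₗ[K] A) (ω : A →ₗ[K] A →ₗ[K] K)
    (hskew : ∀ u v : A, ω u v = - ω v u)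
    (hnondeg : ∀ u : A, (∀ v : A, ω u v = 0) → u = 0)
    (hstar : ∀ u v w : A, ω (star u v) w = - ω v (mul w u))
    (hrel : ∀ u v : A, star u v - star v u = -((1/2 : K) • (mul u v - mul v u))) :
    (∀ u v w : A, mul (mul v w) u = mul (mul v u) w + mul v (mul w u)) ↔
      ((∀ u v w : A, star (star u v) w - star u (star v w)
          = star (star v u) w - star v (star u w)) ∧
        (∀ u v w : A, mul w (mul u v + mul v u) = 0)) := by
  have key : ∀ u v w t : A,
      ω (star (star u v) w - star u (star v w) - (star (star v u) w - star v (star u w))) t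
      = ω (mul (mul t u) v - mul (mul t v) u
            - (1/2 : K) • (mul t (mul u v) - mul t (mul v u))) w := by
    intro u v w t
    have h1 := hstar (star u v) w t
    have h2 := hstar u (star v w) t
    have h3 := hstar (star v u) w t
    have h4 := hstar v (star u w) t
    have h5 := hstar v w (mul t u)
    have h6 := hstar u w (mul t v)
    have hr : mul t (star u v) - mul t (star v u)
        = -((1/2 : K) • (mul t (mul u v) - mul t (mul v u))) := by
      have h := hrel u v
      have : mul t (star u v - star v u) = mul t (-((1/2:K) • (mul u v - mul v u))) := by
        rw [h]
      simpa [map_sub, map_smul, map_neg] using this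
    have hr' := congrArg (fun x => ω w x) hr
    simp only [map_sub, map_smul, map_neg, LinearMap.sub_apply, LinearMap.smul_apply,
      LinearMap.neg_apply, smul_eq_mul] at hr' ⊢
    have s1 := hskew (mul (mul t u) v) w
    have s2 := hskew (mul (mul t v) u) w
    have s3 := hskew (mul t (mul u v)) w
    have s4 := hskew (mul t (mul v u)) w
    linear_combination h1 - h2 - h3 + h4 + h5 - h6 - hr' - s1 + s2 + (1/2) * s3 - (1/2) * s4
  constructor
  · intro hRL
    have hC : ∀ u v w : A, mul w (mul u v + mul v u) = 0 := by
      intro u v w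
      have h1 := hRL v w u
      have h2 := hRL u w v
      rw [map_add]
      have e1 : mul w (mul u v) = mul (mul w u) v - mul (mul w v) u := by
        rw [h1]; abel
      have e2 : mul w (mul v u) = mul (mul w v) u - mul (mul w u) v := by
        rw [h2]; abel
      rw [e1, e2]; abel
    refine ⟨fun u v w => ?_, hC⟩
    have hX : star (star u v) w - star u (star v w)
        - (star (star v u) w - star v (star u w)) = 0 := by
      apply hnondeg
      intro t
      rw [key]
      have hY : mul (mul t u) v - mul (mul t v) u
          - (1/2 : K) • (mul t (mul u v) - mul t (mul v u)) = 0 := by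
        have h1 := hRL v t u
        have h2 : mul t (mul v u) = - mul t (mul u v) := by
          have h := hC u v t
          rw [map_add] at h
          exact eq_neg_of_add_eq_zero_right h
        rw [h1, h2]
        match_scalars <;> ring
      rw [hY, map_zero, LinearMap.zero_apply]
    exact sub_eq_zero.mp hX
  · rintro ⟨hLS, hC⟩
    have hL : ∀ t u v : A, mul (mul t u) v - mul (mul t v) u
        = (1/2 : K) • (mul t (mul u v) - mul t (mul v u)) := by
      intro t u v
      have hY : mul (mul t u) v - mul (mul t v) u
          - (1/2 : K) • (mul t (mul u v) - mul t (mul v u)) = 0 := by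
        apply hnondeg
        intro w
        rw [← key u v w t, sub_eq_zero_of_eq (hLS u v w), map_zero, LinearMap.zero_apply]
      exact sub_eq_zero.mp hY
    intro u v w
    have h1 := hL v w u
    have h2 : mul v (mul u w) = - mul v (mul w u) := by
      have h := hC w u v
      rw [map_add] at h
      exact eq_neg_of_add_eq_zero_right h
    rw [h2, sub_neg_eq_add] at h1
    have : (1/2 : K) • (mul v (mul w u) + mul v (mul w u)) = mul v (mul w u) := by
      match_scalars <;> ring
    rw [this] at h1
    exact sub_eq_iff_eq_add'.mp h1
end

section
/- Let (A,•,ω) be a symplectic left Leibniz algebra over a field K of characteristic zero, with A finite-dimensional, and let ⋆ be the bilinear product determined by ω(u⋆v, w) = −ω(v, u•w) for all u,v,w ∈ A. Then ⋆ is left symmetric; in particular the bracket [u,v] = (1/2)(u•v − v•u) satisfies the Jacobi identity, i.e., (A,•) is Lie-admissible. -/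
/-!
The Leibniz identity, applied to `(u, v, z)` and `(v, u, z)`, gives `(u•v + v•u)•z = 0`, so
left multiplication by `u•v` is the commutator `[L_u, L_v]` of left multiplications, and so is
left multiplication by `(1/2)(u•v - v•u)`. By nondegeneracy of `ω`, the symplectic condition says
exactly that `u⋆v - v⋆u = (1/2)(u•v - v•u)`. Since `⋆` is minus the `ω`-transpose of `•`, left
symmetry of `⋆` is the transpose of `L_{u⋆v - v⋆u} = [L_u, L_v]`. Finally, the commutator of any
left symmetric product satisfies the Jacobi identity, and that commutator is the bracket.
-/

theorem LinearMap.SeparatingLeft.injective {R M N P : Type*} [CommRing R] [AddCommGroup M]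
    [Module R M] [AddCommGroup N] [Module R N] [AddCommGroup P] [Module R P]
    {B : M →ₗ[R] N →ₗ[R] P} (hB : B.SeparatingLeft) : Function.Injective B :=
  LinearMap.ker_eq_bot.mp (LinearMap.separatingLeft_iff_ker_eq_bot.mp hB)

section CommRing

variable {R A : Type*} [CommRing R] [AddCommGroup A] [Module R A]

def IsLeftLeibniz (mul : A →ₗ[R] A →ₗ[R] A) : Prop :=
  ∀ u v w : A, mul u (mul v w) = mul (mul u v) w + mul v (mul u w)

def IsLeftSymmetric (star : A →ₗ[R] A →ₗ[R] A) : Prop :=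
  ∀ u v w : A, star (star u v) w - star u (star v w) = star (star v u) w - star v (star u w)

namespace IsLeftLeibniz

theorem mul_mul_apply_eq_sub {mul : A →ₗ[R] A →ₗ[R] A} (hmul : IsLeftLeibniz mul) (u v z : A) :
    mul (mul u v) z = mul u (mul v z) - mul v (mul u z) := by
  rw [hmul u v z, add_sub_cancel_right]

theorem mul_mul_swap_apply {mul : A →ₗ[R] A →ₗ[R] A} (hmul : IsLeftLeibniz mul)
    (u v z : A) : mul (mul v u) z = -mul (mul u v) z := by
  have h := hmul u v z
  rw [hmul v u z, ← add_assoc, right_eq_add] at h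
  exact eq_neg_of_add_eq_zero_right h

end IsLeftLeibniz

theorem IsLeftSymmetric.jacobi {star : A →ₗ[R] A →ₗ[R] A} (h : IsLeftSymmetric star) (u v w : A) :
    (star - star.flip) ((star - star.flip) u v) w + (star - star.flip) ((star - star.flip) v w) u
      + (star - star.flip) ((star - star.flip) w u) v = 0 := by
  simp only [LinearMap.sub_apply, LinearMap.flip_apply, map_sub]
  linear_combination (norm := abel) h u v w + h v w u + h w u v

theorem isLeftSymmetric_of_mul_commutator {mul star : A →ₗ[R] A →ₗ[R] A}
    {ω : A →ₗ[R] A →ₗ[R] R} (hω : ω.SeparatingLeft)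
    (hstar : ∀ u v w : A, ω (star u v) w = -ω v (mul u w))
    (hL : ∀ u v z : A, mul (star u v - star v u) z = mul u (mul v z) - mul v (mul u z)) :
    IsLeftSymmetric star := by
  intro u v w
  refine hω.injective (LinearMap.ext fun z => ?_)
  have := congrArg (ω w) (hL u v z)
  simp only [map_sub, LinearMap.sub_apply, hstar, neg_neg] at this ⊢
  linear_combination -this

end CommRing

section Field

variable {K A : Type*} [Field K] [AddCommGroup A] [Module K A]
  {mul star : A →ₗ[K] A →ₗ[K] A} {ω : A →ₗ[K] A →ₗ[K] K}

theorem IsLeftLeibniz.mul_half_commutator_apply (hmul : IsLeftLeibniz mul)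
    (h2 : (2 : K) ≠ 0) (u v z : A) :
    mul ((1 / 2 : K) • (mul u v - mul v u)) z = mul u (mul v z) - mul v (mul u z) := by
  rw [map_smul, LinearMap.smul_apply, map_sub, LinearMap.sub_apply, hmul.mul_mul_swap_apply u v,
    sub_neg_eq_add, ← two_smul K, smul_smul, one_div_mul_cancel h2, one_smul,
    hmul.mul_mul_apply_eq_sub]

theorem star_sub_star_swap_of_symplectic (hω : ω.SeparatingLeft)
    (hsymp : ∀ u v w : A, ω u (mul v w) - ω v (mul u w)
      = (1/2 : K) * ω (mul u v) w - (1/2 : K) * ω (mul v u) w)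
    (hstar : ∀ u v w : A, ω (star u v) w = -ω v (mul u w)) (u v : A) :
    star u v - star v u = (1 / 2 : K) • (mul u v - mul v u) := by
  refine hω.injective (LinearMap.ext fun z => ?_)
  simp only [map_sub, map_smul, LinearMap.sub_apply, LinearMap.smul_apply, hstar, smul_eq_mul]
  linear_combination hsymp u v z

end Field

theorem stmt2_general {K A : Type*} [Field K] [CharZero K] [AddCommGroup A] [Module K A]
    (mul star : A →ₗ[K] A →ₗ[K] A) (ω : A →ₗ[K] A →ₗ[K] K)
    (hleib : ∀ u v w : A, mul u (mul v w) = mul (mul u v) w + mul v (mul u w))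
    (hnondeg : ∀ u : A, (∀ v : A, ω u v = 0) → u = 0)
    (hsymp : ∀ u v w : A, ω u (mul v w) - ω v (mul u w)
      = (1/2 : K) * ω (mul u v) w - (1/2 : K) * ω (mul v u) w)
    (hstar : ∀ u v w : A, ω (star u v) w = - ω v (mul u w))
    (brk : A → A → A)
    (hbrk : ∀ u v : A, brk u v = (1/2 : K) • (mul u v - mul v u)) :
    (∀ u v w : A, star (star u v) w - star u (star v w)
        = star (star v u) w - star v (star u w)) ∧
      (∀ u v w : A, brk (brk u v) w + brk (brk v w) u + brk (brk w u) v = 0) := by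
  have hcomm := star_sub_star_swap_of_symplectic hnondeg hsymp hstar
  have hleft : IsLeftSymmetric star := isLeftSymmetric_of_mul_commutator hnondeg hstar
    fun u v z => by rw [hcomm, IsLeftLeibniz.mul_half_commutator_apply hleib two_ne_zero]
  have hbrk_eq : ∀ u v : A, brk u v = (star - star.flip) u v := fun u v => by
    rw [hbrk, ← hcomm, LinearMap.sub_apply, LinearMap.sub_apply, LinearMap.flip_apply]
  refine ⟨hleft, fun u v w => ?_⟩
  simp only [hbrk_eq]
  exact hleft.jacobi u v w

/-- For a symplectic left Leibniz algebra `(A, •, ω)` with `⋆` determined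
by `ω(u⋆v, w) = −ω(v, u•w)`, the product `⋆` is left symmetric and the bracket
`[u,v] = (1/2)(u•v − v•u)` satisfies the Jacobi identity. -/
theorem stmt2 {K A : Type*} [Field K] [CharZero K] [AddCommGroup A] [Module K A]
    [FiniteDimensional K A]
    (mul star : A →ₗ[K] A →ₗ[K] A) (ω : A →ₗ[K] A →ₗ[K] K)
    (hleib : ∀ u v w : A, mul u (mul v w) = mul (mul u v) w + mul v (mul u w))
    (hskew : ∀ u v : A, ω u v = - ω v u)
    (hnondeg : ∀ u : A, (∀ v : A, ω u v = 0) → u = 0)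
    (hsymp : ∀ u v w : A, ω u (mul v w) - ω v (mul u w)
      = (1/2 : K) * ω (mul u v) w - (1/2 : K) * ω (mul v u) w)
    (hstar : ∀ u v w : A, ω (star u v) w = - ω v (mul u w))
    (brk : A → A → A)
    (hbrk : ∀ u v : A, brk u v = (1/2 : K) • (mul u v - mul v u)) :
    (∀ u v w : A, star (star u v) w - star u (star v w)
        = star (star v u) w - star v (star u w)) ∧
      (∀ u v w : A, brk (brk u v) w + brk (brk v w) u + brk (brk w u) v = 0) :=
  stmt2_general mul star ω hleib hnondeg hsymp hstar brk hbrk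
end

section
/- Let (A,•,ω) be a symplectic left Leibniz algebra over a field K of characteristic zero, with A finite-dimensional. Suppose I ⊆ A is a subspace such that: (a) A•I ⊆ I and I•A ⊆ I; (b) Leib(A) ⊆ I; (c) I ∩ I^⊥ = {0}; and (d) u•v = 0 for every u ∈ I and v ∈ A. Then u•v + v•u = 0 for all u,v ∈ A, i.e., (A,•) is a Lie algebra. -/
/-- If a symplectic left Leibniz algebra `(A, •, ω)` admits a subspace
`I` which is a two-sided ideal containing `Leib(A)`, nondegenerate
(`I ∩ I^⊥ = {0}`), and with `u•v = 0` for all `u ∈ I`, then `(A, •)` is a Lie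
algebra, i.e. `u•v + v•u = 0` for all `u, v`. -/
theorem stmt5 {K A : Type*} [Field K] [CharZero K] [AddCommGroup A] [Module K A]
    [FiniteDimensional K A]
    (mul : A →ₗ[K] A →ₗ[K] A) (ω : A →ₗ[K] A →ₗ[K] K)
    (hleib : ∀ u v w : A, mul u (mul v w) = mul (mul u v) w + mul v (mul u w))
    (hskew : ∀ u v : A, ω u v = - ω v u)
    (hnondeg : ∀ u : A, (∀ v : A, ω u v = 0) → u = 0)
    (hsymp : ∀ u v w : A, ω u (mul v w) - ω v (mul u w)
      = (1/2 : K) * ω (mul u v) w - (1/2 : K) * ω (mul v u) w)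
    (I : Submodule K A)
    (hIr : ∀ u : A, ∀ v ∈ I, mul u v ∈ I)
    (hIl : ∀ u ∈ I, ∀ v : A, mul u v ∈ I)
    (hLeib : Submodule.span K {x : A | ∃ u v : A, x = mul u v + mul v u} ≤ I)
    (hInd : ∀ x ∈ I, (∀ s ∈ I, ω x s = 0) → x = 0)
    (hItriv : ∀ u ∈ I, ∀ v : A, mul u v = 0) :
    ∀ u v : A, mul u v + mul v u = 0 := by
  -- Step 1: for `i, j ∈ I` and any `u`, `ω (u•j) i = (1/2) ω (u•i) j`.
  have step1 : ∀ (u : A), ∀ i ∈ I, ∀ j ∈ I,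
      ω (mul u j) i = (1/2 : K) * ω (mul u i) j := by
    intro u i hi j hj
    have h := hsymp u i j
    rw [hItriv i hi j, hItriv i hi u] at h
    simp only [map_zero, LinearMap.zero_apply] at h
    have hs := hskew i (mul u j)
    -- h : ω u 0 - ω i (mul u j) = 1/2 * ω (mul u i) j - 1/2 * ω 0 j
    linear_combination h + hs
  -- Step 2: `u • j = 0` for all `u : A`, `j ∈ I`.
  have step2 : ∀ (u : A), ∀ j ∈ I, mul u j = 0 := by
    intro u j hj
    apply hInd _ (hIr u j hj)
    intro i hi
    have h1 := step1 u i hi j hj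
    have h2 := step1 u j hj i hi
    linear_combination (4/3 : K) * h1 + (2/3 : K) * h2
  -- Step 3: for `s ∈ I`, `ω s (u•v) = 0`.
  have step3 : ∀ s ∈ I, ∀ u v : A, ω s (mul u v) = 0 := by
    intro s hs u v
    have h := hsymp s u v
    rw [hItriv s hs v, hItriv s hs u, step2 u s hs] at h
    simp only [map_zero, LinearMap.zero_apply] at h
    linear_combination h
  -- Conclusion
  intro u v
  have hLI : mul u v + mul v u ∈ I :=
    hLeib (Submodule.subset_span ⟨u, v, rfl⟩)
  apply hInd _ hLI
  intro s hs
  have h1 := step3 s hs u v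
  have h2 := step3 s hs v u
  have hs1 := hskew (mul u v + mul v u) s
  have hs2 : ω s (mul u v + mul v u) = ω s (mul u v) + ω s (mul v u) := by
    rw [map_add]
  rw [hs1, hs2, h1, h2]
  ring
end

section
/- Let (A,•,ω) be a symplectic left Leibniz algebra over a field K of characteristic zero, with A finite-dimensional, and let ⋆ be the bilinear product determined by ω(u⋆v, w) = −ω(v, u•w) for all u,v,w ∈ A. Then Leib(A) is a two-sided ideal for both • and ⋆: for every u ∈ Leib(A) and v ∈ A one has u•v = 0, u⋆v = 0, v•u ∈ Leib(A), and v⋆u ∈ Leib(A). -/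
/-- In a symplectic left Leibniz algebra `(A, •, ω)` with `⋆` determined
by `ω(u⋆v, w) = −ω(v, u•w)`, the Leibniz ideal `Leib(A)` (the span of the elements
`u•v + v•u`) is a two-sided ideal for both `•` and `⋆`: for `u ∈ Leib(A)` and
`v ∈ A`, `u•v = 0`, `u⋆v = 0`, `v•u ∈ Leib(A)` and `v⋆u ∈ Leib(A)`. -/
theorem stmt6 {K A : Type*} [Field K] [CharZero K] [AddCommGroup A] [Module K A]
    [FiniteDimensional K A]
    (mul star : A →ₗ[K] A →ₗ[K] A) (ω : A →ₗ[K] A →ₗ[K] K)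
    (hleib : ∀ u v w : A, mul u (mul v w) = mul (mul u v) w + mul v (mul u w))
    (hskew : ∀ u v : A, ω u v = - ω v u)
    (hnondeg : ∀ u : A, (∀ v : A, ω u v = 0) → u = 0)
    (hsymp : ∀ u v w : A, ω u (mul v w) - ω v (mul u w)
      = (1/2 : K) * ω (mul u v) w - (1/2 : K) * ω (mul v u) w)
    (hstar : ∀ u v w : A, ω (star u v) w = - ω v (mul u w))
    (Leib : Submodule K A)
    (hLeib : Leib = Submodule.span K {x : A | ∃ u v : A, x = mul u v + mul v u}) :
    ∀ u ∈ Leib, ∀ v : A,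
      mul u v = 0 ∧ star u v = 0 ∧ mul v u ∈ Leib ∧ star v u ∈ Leib := by
  -- Left multiplication by elements of Leib is zero
  have hmul0 : ∀ u ∈ Leib, ∀ v : A, mul u v = 0 := by
    intro u hu
    rw [hLeib] at hu
    induction hu using Submodule.span_induction with
    | mem x hx =>
      obtain ⟨a, b, rfl⟩ := hx
      intro w
      have h1 := eq_sub_of_add_eq (hleib a b w).symm
      have h2 := eq_sub_of_add_eq (hleib b a w).symm
      rw [show (mul (mul a b + mul b a)) w = mul (mul a b) w + mul (mul b a) w by
        simp [map_add], h1, h2]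
      abel
    | zero => intro w; simp
    | add x y _ _ hx hy => intro w; simp [map_add, hx w, hy w]
    | smul c x _ hx => intro w; simp [map_smul, hx w]
  -- Right multiplication preserves Leib
  have hrmul : ∀ u ∈ Leib, ∀ v : A, mul v u ∈ Leib := by
    intro u hu v
    rw [hLeib] at hu ⊢
    induction hu using Submodule.span_induction with
    | mem x hx =>
      obtain ⟨a, b, rfl⟩ := hx
      have key : mul v (mul a b + mul b a)
          = (mul (mul v a) b + mul b (mul v a)) + (mul a (mul v b) + mul (mul v b) a) := by
        rw [map_add, hleib v a b, hleib v b a]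
        abel
      rw [key]
      exact Submodule.add_mem _
        (Submodule.subset_span ⟨mul v a, b, rfl⟩)
        (Submodule.subset_span ⟨a, mul v b, rfl⟩)
    | zero => simp
    | add x y _ _ hx hy => simp only [map_add]; exact Submodule.add_mem _ hx hy
    | smul c x _ hx => simp only [map_smul]; exact Submodule.smul_mem _ _ hx
  intro u hu v
  have hmu : ∀ w : A, mul u w = 0 := hmul0 u hu
  refine ⟨hmu v, ?_, hrmul u hu v, ?_⟩
  · -- star u v = 0
    apply hnondeg
    intro w
    rw [hstar, hmu w]
    simp
  · -- star v u = (1/2) • mul v u ∈ Leib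
    have key : star v u = (1/2 : K) • mul v u := by
      have h : star v u - (1/2 : K) • mul v u = 0 := by
        apply hnondeg
        intro w
        have hs := hsymp u v w
        rw [hmu w, hmu v] at hs
        simp only [map_zero, LinearMap.zero_apply] at hs
        simp only [map_sub, map_smul, LinearMap.sub_apply, LinearMap.smul_apply,
          smul_eq_mul]
        rw [hstar]
        linear_combination -hs
      exact sub_eq_zero.mp h
    rw [key]
    exact Submodule.smul_mem _ _ (hrmul u hu v)
end

section
/- Let (A,•,ω) be a symplectic left Leibniz algebra over a field K of characteristic zero, with A finite-dimensional, let ⋆ be the bilinear product determined by ω(u⋆v, w) = −ω(v, u•w) for all u,v,w ∈ A, and set I = Leib(A) ∩ Leib(A)^⊥. Then I^⊥ is a two-sided ideal for both • and ⋆: for every u ∈ I^⊥ and v ∈ A, the elements u•v, v•u, u⋆v, and v⋆u all belong to I^⊥. -/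
/-- The orthogonal of a subspace `S` with respect to a bilinear form `ω`. -/
def perp {K A : Type*} [Field K] [AddCommGroup A] [Module K A]
    (ω : A →ₗ[K] A →ₗ[K] K) (S : Submodule K A) : Submodule K A where
  carrier := {x : A | ∀ s ∈ S, ω x s = 0}
  add_mem' := fun {x y} hx hy s hs => by
    simp [map_add, LinearMap.add_apply, hx s hs, hy s hs]
  zero_mem' := fun s hs => by simp
  smul_mem' := fun c x hx s hs => by
    simp [map_smul, LinearMap.smul_apply, hx s hs]

/-- In a symplectic left Leibniz algebra `(A, •, ω)` with `⋆` determined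
by `ω(u⋆v, w) = −ω(v, u•w)` and `I = Leib(A) ∩ Leib(A)^⊥`, the subspace `I^⊥` is a
two-sided ideal for both `•` and `⋆`: for `u ∈ I^⊥` and `v ∈ A`, the elements
`u•v`, `v•u`, `u⋆v` and `v⋆u` all belong to `I^⊥`. -/
theorem stmt8 {K A : Type*} [Field K] [CharZero K] [AddCommGroup A] [Module K A]
    [FiniteDimensional K A]
    (mul star : A →ₗ[K] A →ₗ[K] A) (ω : A →ₗ[K] A →ₗ[K] K)
    (hleib : ∀ u v w : A, mul u (mul v w) = mul (mul u v) w + mul v (mul u w))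
    (hskew : ∀ u v : A, ω u v = - ω v u)
    (hnondeg : ∀ u : A, (∀ v : A, ω u v = 0) → u = 0)
    (hsymp : ∀ u v w : A, ω u (mul v w) - ω v (mul u w)
      = (1/2 : K) * ω (mul u v) w - (1/2 : K) * ω (mul v u) w)
    (hstar : ∀ u v w : A, ω (star u v) w = - ω v (mul u w))
    (Leib I : Submodule K A)
    (hLeib : Leib = Submodule.span K {x : A | ∃ u v : A, x = mul u v + mul v u})
    (hI : I = Leib ⊓ perp ω Leib) :
    ∀ u ∈ perp ω I, ∀ v : A,
      mul u v ∈ perp ω I ∧ mul v u ∈ perp ω I ∧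
        star u v ∈ perp ω I ∧ star v u ∈ perp ω I := by
  have hgen : ∀ a b : A, mul a b + mul b a ∈ Leib := by
    intro a b
    rw [hLeib]
    exact Submodule.subset_span ⟨a, b, rfl⟩
  -- Lemma A : elements of Leib left-multiply to zero.
  have lemA : ∀ x ∈ Leib, ∀ w : A, mul x w = 0 := by
    intro x hx
    rw [hLeib] at hx
    induction hx using Submodule.span_induction with
    | mem y hy =>
      obtain ⟨a, b, rfl⟩ := hy
      intro w
      have e1 : mul (mul a b) w = mul a (mul b w) - mul b (mul a w) := by
        rw [hleib a b w]; abel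
      have e2 : mul (mul b a) w = mul b (mul a w) - mul a (mul b w) := by
        rw [hleib b a w]; abel
      simp only [map_add, LinearMap.add_apply, e1, e2]; abel
    | zero => intro w; simp
    | add x y hx hy ihx ihy =>
      intro w
      simp only [map_add, LinearMap.add_apply, ihx w, ihy w, add_zero]
    | smul a x hx ih =>
      intro w
      simp only [map_smul, LinearMap.smul_apply, ih w, smul_zero]
  -- Lemma L : Leib is a left ideal.
  have lemL : ∀ v : A, ∀ x ∈ Leib, mul v x ∈ Leib := by
    intro v x hx
    rw [hLeib] at hx
    induction hx using Submodule.span_induction with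
    | mem y hy =>
      obtain ⟨a, b, rfl⟩ := hy
      have e : mul v (mul a b + mul b a)
          = (mul (mul v a) b + mul b (mul v a)) + (mul (mul v b) a + mul a (mul v b)) := by
        rw [map_add, hleib v a b, hleib v b a]; abel
      rw [e]
      exact Submodule.add_mem _ (hgen (mul v a) b) (hgen (mul v b) a)
    | zero => simp
    | add x y hx hy ihx ihy =>
      rw [map_add]; exact Submodule.add_mem _ ihx ihy
    | smul a x hx ih =>
      rw [map_smul]; exact Submodule.smul_mem _ _ ih
  -- key identity : for x ∈ Leib, ω x (u•w) = -(1/2) ω (u•x) w.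
  have key : ∀ x ∈ Leib, ∀ u w : A, ω x (mul u w) = -(1/2 : K) * ω (mul u x) w := by
    intro x hx u w
    have h := hsymp x u w
    rw [lemA x hx w, lemA x hx u] at h
    simp only [map_zero, LinearMap.zero_apply, mul_zero, zero_sub, sub_zero] at h
    linear_combination h
  -- membership in Leib^⊥ gives vanishing against Leib on both sides.
  have hperpL : ∀ s ∈ perp ω Leib, ∀ t ∈ Leib, ω t s = 0 := by
    intro s hs t ht
    rw [hskew t s, hs t ht, neg_zero]
  -- Lemma B : I is a left ideal.
  have lemB : ∀ v : A, ∀ s ∈ I, mul v s ∈ I := by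
    intro v s hs
    rw [hI] at hs ⊢
    obtain ⟨hs1, hs2⟩ := hs
    refine ⟨lemL v s hs1, ?_⟩
    intro t ht
    have h1 : ω t (mul v s) = -(1/2 : K) * ω (mul v t) s := key t ht v s
    have h2 : ω (mul v t) s = 0 := hperpL s hs2 _ (lemL v t ht)
    rw [hskew (mul v s) t, h1, h2]
    ring
  -- Lemma C : for u ∈ I^⊥ and s ∈ I, mul u s = 0.
  have lemC : ∀ u ∈ perp ω I, ∀ s ∈ I, mul u s = 0 := by
    intro u hu s hs
    have hsL : s ∈ Leib := by rw [hI] at hs; exact hs.1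
    have hsP : s ∈ perp ω Leib := by rw [hI] at hs; exact hs.2
    apply hnondeg
    intro w
    have h := hsymp u w s
    have h1 : ω u (mul w s) = 0 := hu _ (lemB w s hs)
    have h2 : ω (mul u w) s + ω (mul w u) s = 0 := by
      have h2' := hperpL s hsP _ (hgen u w)
      simpa only [map_add, LinearMap.add_apply] using h2'
    have ha : ω (mul u w) s = (1/2 : K) * ω (mul u s) w := by
      have h5 := hskew s (mul u w)
      have h4 := key s hsL u w
      linear_combination h5 - h4
    have hc : ω (mul u s) w
        = (1/2 : K) * ω (mul u w) s - (1/2 : K) * ω (mul w u) s := by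
      have h6 := hskew w (mul u s)
      linear_combination h - h1 + h6
    linear_combination 2 * ha - h2 + 2 * hc
  -- main proof
  intro u hu v
  refine ⟨?_, ?_, ?_, ?_⟩
  · intro s hs
    have hsL : s ∈ Leib := by rw [hI] at hs; exact hs.1
    have h := key s hsL u v
    rw [lemC u hu s hs] at h
    simp only [map_zero, LinearMap.zero_apply, mul_zero, neg_zero] at h
    rw [hskew, h, neg_zero]
  · intro s hs
    have hsL : s ∈ Leib := by rw [hI] at hs; exact hs.1
    have h := key s hsL v u
    have h2 : ω u (mul v s) = 0 := hu _ (lemB v s hs)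
    have h3 : ω (mul v s) u = 0 := by rw [hskew, h2, neg_zero]
    rw [h3, mul_zero] at h
    rw [hskew, h, neg_zero]
  · intro s hs
    rw [hstar, lemC u hu s hs]
    simp
  · intro s hs
    rw [hstar, hu _ (lemB v s hs), neg_zero]
end

section
/- Let (A,•) be a symmetric Leibniz algebra over a field K of characteristic zero, with A finite-dimensional, and let ω be a nondegenerate skew-symmetric bilinear form on A. Write [u,v] = (1/2)(u•v − v•u) and u⋄v = (1/2)(u•v + v•u). Then ω satisfies both the left symplectic condition ω(u, v•w) − ω(v, u•w) = (1/2)ω(u•v, w) − (1/2)ω(v•u, w) and the right symplectic condition ω(u, w•v) − ω(v, w•u) = (1/2)ω(v•u, w) − (1/2)ω(u•v, w) for all u,v,w ∈ A if and only if, for all u,v,w ∈ A, ω([u,v],w) + ω([v,w],u) + ω([w,u],v) = 0 and ω(u⋄w, v) = ω(v⋄w, u). -/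
/-- For a symmetric Leibniz algebra `(A, •)` with a nondegenerate
skew-symmetric bilinear form `ω`, with `[u,v] = (1/2)(u•v − v•u)` and
`u⋄v = (1/2)(u•v + v•u)`, the form `ω` satisfies both the left and the right
symplectic conditions iff it is closed on brackets
(`ω([u,v],w) + ω([v,w],u) + ω([w,u],v) = 0`) and `ω(u⋄w, v) = ω(v⋄w, u)`. -/
theorem stmt9 {K A : Type*} [Field K] [CharZero K] [AddCommGroup A] [Module K A]
    [FiniteDimensional K A]
    (mul : A →ₗ[K] A →ₗ[K] A) (ω : A →ₗ[K] A →ₗ[K] K)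
    (hlleib : ∀ u v w : A, mul u (mul v w) = mul (mul u v) w + mul v (mul u w))
    (hrleib : ∀ u v w : A, mul (mul v w) u = mul (mul v u) w + mul v (mul w u))
    (hskew : ∀ u v : A, ω u v = - ω v u)
    (hnondeg : ∀ u : A, (∀ v : A, ω u v = 0) → u = 0)
    (brk diam : A → A → A)
    (hbrk : ∀ u v : A, brk u v = (1/2 : K) • (mul u v - mul v u))
    (hdiam : ∀ u v : A, diam u v = (1/2 : K) • (mul u v + mul v u)) :
    ((∀ u v w : A, ω u (mul v w) - ω v (mul u w)
        = (1/2 : K) * ω (mul u v) w - (1/2 : K) * ω (mul v u) w) ∧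
      (∀ u v w : A, ω u (mul w v) - ω v (mul w u)
        = (1/2 : K) * ω (mul v u) w - (1/2 : K) * ω (mul u v) w)) ↔
      ((∀ u v w : A, ω (brk u v) w + ω (brk v w) u + ω (brk w u) v = 0) ∧
        (∀ u v w : A, ω (diam u w) v = ω (diam v w) u)) := by
  constructor
  · rintro ⟨hL, hR⟩
    constructor
    · intro u v w
      simp only [hbrk, map_sub, map_smul, LinearMap.smul_apply, LinearMap.sub_apply,
        smul_eq_mul]
      linear_combination (1/2 : K) * (hR u v w) - (1/2 : K) * (hL u v w)
        + (1/2 : K) * hskew u (mul v w) - (1/2 : K) * hskew v (mul u w)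
        - (1/2 : K) * hskew u (mul w v) + (1/2 : K) * hskew v (mul w u)
    · intro u v w
      simp only [hdiam, map_add, map_smul, LinearMap.smul_apply, LinearMap.add_apply,
        smul_eq_mul]
      linear_combination (1/2 : K) * (hL u v w) + (1/2 : K) * (hR u v w)
        - (1/2 : K) * hskew u (mul v w) + (1/2 : K) * hskew v (mul u w)
        - (1/2 : K) * hskew u (mul w v) + (1/2 : K) * hskew v (mul w u)
  · rintro ⟨hC, hD⟩
    have hC' : ∀ u v w : A, ω (mul u v) w - ω (mul v u) w + (ω (mul v w) u - ω (mul w v) u)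
        + (ω (mul w u) v - ω (mul u w) v) = 0 := by
      intro u v w
      have h := hC u v w
      simp only [hbrk, map_sub, map_smul, LinearMap.smul_apply, LinearMap.sub_apply,
        smul_eq_mul] at h
      linear_combination 2 * h
    have hD' : ∀ u v w : A, ω (mul u w) v + ω (mul w u) v
        = ω (mul v w) u + ω (mul w v) u := by
      intro u v w
      have h := hD u v w
      simp only [hdiam, map_add, map_smul, LinearMap.smul_apply, LinearMap.add_apply,
        smul_eq_mul] at h
      linear_combination 2 * h
    constructor
    · intro u v w
      linear_combination (1/2 : K) * (hD' u v w) - (1/2 : K) * (hC' u v w)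
        + hskew u (mul v w) - hskew v (mul u w)
    · intro u v w
      linear_combination (1/2 : K) * (hC' u v w) + (1/2 : K) * (hD' u v w)
        + hskew u (mul w v) - hskew v (mul w u)
end

section
/- Let (A,[·,·]) be a finite-dimensional Lie algebra over a field K of characteristic zero, and ω a nondegenerate skew-symmetric bilinear form on A satisfying ω([u,v],w) + ω([v,w],u) + ω([w,u],v) = 0 for all u,v,w. Let I be a subspace of the center Z(A) with ω(I,I) = 0, let T : A×A×A → K be a trilinear form invariant under all permutations of its arguments such that T(u,v,w) = 0 whenever u ∈ I^⊥, and let ρ : A×A → A be the bilinear map determined by ω(ρ(u,v), w) = T(u,v,w) for all w. Then the product u•v := [u,v] + ρ(u,v) satisfies both the left and the right Leibniz identities, and ω satisfies both ω(u, v•w) − ω(v, u•w) = (1/2)ω(u•v, w) − (1/2)ω(v•u, w) and ω(u, w•v) − ω(v, w•u) = (1/2)ω(v•u, w) − (1/2)ω(u•v, w) for all u,v,w ∈ A. -/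
/-!
Every bracket `[u,v]` is `ω`-orthogonal to the center, hence lies in `I^⊥`. Since `T` is
symmetric and vanishes on `I^⊥`, `ω(ρ(u,v), ·)` vanishes on `I^⊥`, so
`ρ(u,v) ∈ (I^⊥)^⊥ = I`: `ρ` takes values in the isotropic central subspace `I ⊆ I^⊥`, and it
vanishes as soon as one argument lies in `I^⊥`. All correction terms in the iterated products
therefore vanish, `u•(v•w) = [u,[v,w]]` and `(u•v)•w = [[u,v],w]`, and both Leibniz identities
are the Jacobi identity. In the identities for `ω` the bracket part is the closedness of `ω`,
and the `ρ`-terms cancel because `ω(u, ρ(v,w)) = -T(u,v,w)` is symmetric in `u` and `v`.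
-/

namespace SymplecticLieDeformation

variable {K A : Type*} [Field K] [AddCommGroup A] [Module K A]

lemma mem_of_forall_perp [FiniteDimensional K A] {ω : A →ₗ[K] A →ₗ[K] K}
    (hskew : ∀ u v : A, ω u v = - ω v u)
    (hnondeg : ∀ u : A, (∀ v : A, ω u v = 0) → u = 0) {I : Submodule K A} {x : A}
    (hx : ∀ n : A, (∀ s ∈ I, ω n s = 0) → ω x n = 0) : x ∈ I := by
  have hrefl : LinearMap.IsRefl ω := fun x y h => by rw [hskew, h, neg_zero]
  rw [← LinearMap.BilinForm.orthogonal_orthogonal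
    (hrefl.nondegenerate_iff_separatingLeft.mpr hnondeg) hrefl I]
  intro n hn
  exact hrefl _ _ (hx n fun s hs => by rw [hskew, hn s hs, neg_zero])

section Bracket

variable (brk : A →ₗ[K] A →ₗ[K] A)

lemma brk_brk_eq_of_jacobi (hanti : ∀ u v : A, brk u v = - brk v u)
    (hjac : ∀ u v w : A, brk (brk u v) w + brk (brk v w) u + brk (brk w u) v = 0)
    (u v w : A) :
    brk u (brk v w) = brk (brk u v) w + brk v (brk u w) := by
  rw [hanti u (brk v w), hanti v (brk u w), hanti u w, map_neg, LinearMap.neg_apply, neg_neg]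
  linear_combination (norm := module) -hjac u v w

lemma brk_brk_eq_of_jacobi' (hanti : ∀ u v : A, brk u v = - brk v u)
    (hjac : ∀ u v w : A, brk (brk u v) w + brk (brk v w) u + brk (brk w u) v = 0)
    (u v w : A) :
    brk (brk v w) u = brk (brk v u) w + brk v (brk w u) := by
  rw [hanti (brk v w), brk_brk_eq_of_jacobi brk hanti hjac, hanti u v, hanti u w]
  simp only [map_neg, LinearMap.neg_apply, neg_add, neg_neg]

variable (ω : A →ₗ[K] A →ₗ[K] K)

lemma omega_brk_sub_omega_brk (hanti : ∀ u v : A, brk u v = - brk v u)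
    (hskew : ∀ u v : A, ω u v = - ω v u)
    (hclosed : ∀ u v w : A, ω (brk u v) w + ω (brk v w) u + ω (brk w u) v = 0) (u v w : A) :
    ω u (brk v w) - ω v (brk u w) = ω (brk u v) w := by
  rw [hskew u, hskew v, hanti u w, map_neg, LinearMap.neg_apply]
  linear_combination -hclosed u v w

lemma omega_brk_eq_zero_of_central (hanti : ∀ u v : A, brk u v = - brk v u)
    (hclosed : ∀ u v w : A, ω (brk u v) w + ω (brk v w) u + ω (brk w u) v = 0)
    {s : A} (hs : ∀ y : A, brk s y = 0) (u v : A) : ω (brk u v) s = 0 := by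
  simpa [hanti v s, hs] using hclosed u v s

end Bracket

section Rho

variable (ω : A →ₗ[K] A →ₗ[K] K) (I : Submodule K A) (T : A →ₗ[K] A →ₗ[K] A →ₗ[K] K)
  (ρ : A →ₗ[K] A →ₗ[K] A)

lemma rho_comm (hnondeg : ∀ u : A, (∀ v : A, ω u v = 0) → u = 0)
    (hT12 : ∀ u v w : A, T u v w = T v u w) (hρ : ∀ u v w : A, ω (ρ u v) w = T u v w)
    (u v : A) : ρ u v = ρ v u :=
  sub_eq_zero.mp <| hnondeg _ fun w => by
    rw [map_sub, LinearMap.sub_apply, hρ, hρ, hT12, sub_self]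

lemma rho_eq_zero_of_perp (hnondeg : ∀ u : A, (∀ v : A, ω u v = 0) → u = 0)
    (hTperp : ∀ u : A, (∀ s ∈ I, ω u s = 0) → ∀ v w : A, T u v w = 0)
    (hρ : ∀ u v w : A, ω (ρ u v) w = T u v w) {x : A} (hx : ∀ s ∈ I, ω x s = 0)
    (y : A) : ρ x y = 0 :=
  hnondeg _ fun w => by rw [hρ, hTperp x hx]

lemma rho_mem [FiniteDimensional K A] (hskew : ∀ u v : A, ω u v = - ω v u)
    (hnondeg : ∀ u : A, (∀ v : A, ω u v = 0) → u = 0)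
    (hT12 : ∀ u v w : A, T u v w = T v u w) (hT23 : ∀ u v w : A, T u v w = T u w v)
    (hTperp : ∀ u : A, (∀ s ∈ I, ω u s = 0) → ∀ v w : A, T u v w = 0)
    (hρ : ∀ u v w : A, ω (ρ u v) w = T u v w) (u v : A) : ρ u v ∈ I :=
  mem_of_forall_perp hskew hnondeg fun n hn => by rw [hρ, hT23, hT12, hTperp n hn]

lemma omega_rho_comm (hskew : ∀ u v : A, ω u v = - ω v u)
    (hT12 : ∀ u v w : A, T u v w = T v u w) (hT23 : ∀ u v w : A, T u v w = T u w v)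
    (hρ : ∀ u v w : A, ω (ρ u v) w = T u v w) (u v w : A) :
    ω u (ρ v w) = ω v (ρ u w) := by
  rw [hskew u, hskew v, hρ, hρ, hT12, hT23, hT12]

end Rho

section Product

variable (brk : A →ₗ[K] A →ₗ[K] A) (ω : A →ₗ[K] A →ₗ[K] K) (ρ : A →ₗ[K] A →ₗ[K] A)
  (mul : A → A → A)

lemma mul_mul_eq_brk_brk (hmul : ∀ u v : A, mul u v = brk u v + ρ u v)
    (hbrk_rho : ∀ x u v : A, brk x (ρ u v) = 0) (hrho_brk : ∀ x u v : A, ρ x (brk u v) = 0)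
    (hrho_rho : ∀ x u v : A, ρ x (ρ u v) = 0) (u v w : A) :
    mul u (mul v w) = brk u (brk v w) := by
  rw [hmul, hmul, map_add, map_add, hbrk_rho, hrho_brk, hrho_rho, add_zero, add_zero, add_zero]

lemma mul_mul_eq_brk_brk' (hmul : ∀ u v : A, mul u v = brk u v + ρ u v)
    (hanti : ∀ u v : A, brk u v = - brk v u) (hrho_comm : ∀ u v : A, ρ u v = ρ v u)
    (hbrk_rho : ∀ x u v : A, brk x (ρ u v) = 0) (hrho_brk : ∀ x u v : A, ρ x (brk u v) = 0)
    (hrho_rho : ∀ x u v : A, ρ x (ρ u v) = 0) (u v w : A) :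
    mul (mul u v) w = brk (brk u v) w := by
  rw [hmul, hmul, hanti (brk u v + ρ u v), hrho_comm (brk u v + ρ u v), map_add, map_add,
    hbrk_rho, hrho_brk, hrho_rho, add_zero, add_zero, add_zero, ← hanti]

lemma omega_mul_sub_omega_mul (hmul : ∀ u v : A, mul u v = brk u v + ρ u v)
    (hanti : ∀ u v : A, brk u v = - brk v u) (hskew : ∀ u v : A, ω u v = - ω v u)
    (hclosed : ∀ u v w : A, ω (brk u v) w + ω (brk v w) u + ω (brk w u) v = 0)
    (homega_rho : ∀ u v w : A, ω u (ρ v w) = ω v (ρ u w)) (u v w : A) :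
    ω u (mul v w) - ω v (mul u w) = ω (brk u v) w := by
  rw [hmul, hmul, map_add, map_add, homega_rho u,
    ← omega_brk_sub_omega_brk brk ω hanti hskew hclosed]
  ring

lemma omega_mul_sub_omega_mul' (hmul : ∀ u v : A, mul u v = brk u v + ρ u v)
    (hanti : ∀ u v : A, brk u v = - brk v u) (hskew : ∀ u v : A, ω u v = - ω v u)
    (hclosed : ∀ u v w : A, ω (brk u v) w + ω (brk v w) u + ω (brk w u) v = 0)
    (hrho_comm : ∀ u v : A, ρ u v = ρ v u)
    (homega_rho : ∀ u v w : A, ω u (ρ v w) = ω v (ρ u w)) (u v w : A) :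
    ω u (mul w v) - ω v (mul w u) = - ω (brk u v) w := by
  rw [hmul, hmul, hanti w, hanti w, hrho_comm w, hrho_comm w, map_add, map_add, map_neg, map_neg,
    homega_rho u, ← omega_brk_sub_omega_brk brk ω hanti hskew hclosed]
  ring

lemma omega_mul_sub_omega_mul_swap (hmul : ∀ u v : A, mul u v = brk u v + ρ u v)
    (hanti : ∀ u v : A, brk u v = - brk v u) (hrho_comm : ∀ u v : A, ρ u v = ρ v u)
    (u v w : A) :
    ω (mul u v) w - ω (mul v u) w = 2 * ω (brk u v) w := by
  rw [hmul, hmul, hanti v, hrho_comm v]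
  simp only [map_add, map_neg, LinearMap.add_apply, LinearMap.neg_apply]
  ring

end Product

end SymplecticLieDeformation

open SymplecticLieDeformation

/-- Given a symplectic Lie algebra `(A, [·,·], ω)`, a totally isotropic
subspace `I` of the center, a fully symmetric trilinear form `T` vanishing whenever
its first argument lies in `I^⊥`, and `ρ` defined by `ω(ρ(u,v), w) = T(u,v,w)`,
the product `u•v = [u,v] + ρ(u,v)` is both left and right Leibniz and `ω` satisfies
both the left and the right symplectic conditions. -/
theorem stmt10 {K A : Type*} [Field K] [CharZero K] [AddCommGroup A] [Module K A]
    [FiniteDimensional K A]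
    (brk : A →ₗ[K] A →ₗ[K] A)
    (hanti : ∀ u v : A, brk u v = - brk v u)
    (hjac : ∀ u v w : A, brk (brk u v) w + brk (brk v w) u + brk (brk w u) v = 0)
    (ω : A →ₗ[K] A →ₗ[K] K)
    (hskew : ∀ u v : A, ω u v = - ω v u)
    (hnondeg : ∀ u : A, (∀ v : A, ω u v = 0) → u = 0)
    (hclosed : ∀ u v w : A, ω (brk u v) w + ω (brk v w) u + ω (brk w u) v = 0)
    (I : Submodule K A)
    (hIcent : ∀ x ∈ I, ∀ y : A, brk x y = 0)
    (hIiso : ∀ x ∈ I, ∀ y ∈ I, ω x y = 0)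
    (T : A →ₗ[K] A →ₗ[K] A →ₗ[K] K)
    (hT12 : ∀ u v w : A, T u v w = T v u w)
    (hT23 : ∀ u v w : A, T u v w = T u w v)
    (hTperp : ∀ u : A, (∀ s ∈ I, ω u s = 0) → ∀ v w : A, T u v w = 0)
    (ρ : A →ₗ[K] A →ₗ[K] A)
    (hρ : ∀ u v w : A, ω (ρ u v) w = T u v w)
    (mul : A → A → A)
    (hmul : ∀ u v : A, mul u v = brk u v + ρ u v) :
    (∀ u v w : A, mul u (mul v w) = mul (mul u v) w + mul v (mul u w)) ∧
      (∀ u v w : A, mul (mul v w) u = mul (mul v u) w + mul v (mul w u)) ∧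
      (∀ u v w : A, ω u (mul v w) - ω v (mul u w)
        = (1/2 : K) * ω (mul u v) w - (1/2 : K) * ω (mul v u) w) ∧
      (∀ u v w : A, ω u (mul w v) - ω v (mul w u)
        = (1/2 : K) * ω (mul v u) w - (1/2 : K) * ω (mul u v) w) := by
  have hrho_mem := rho_mem ω I T ρ hskew hnondeg hT12 hT23 hTperp hρ
  have hrho_comm := rho_comm ω T ρ hnondeg hT12 hρ
  have hrho_perp : ∀ x : A, (∀ s ∈ I, ω x s = 0) → ∀ y : A, ρ x y = 0 :=
    fun _ => rho_eq_zero_of_perp ω I T ρ hnondeg hTperp hρ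
  have hbrk_rho : ∀ x u v : A, brk x (ρ u v) = 0 := fun x u v => by
    rw [hanti, hIcent _ (hrho_mem u v), neg_zero]
  have hrho_brk : ∀ x u v : A, ρ x (brk u v) = 0 := fun x u v => by
    rw [hrho_comm]
    exact hrho_perp _
      (fun s hs => omega_brk_eq_zero_of_central brk ω hanti hclosed (hIcent s hs) u v) x
  have hrho_rho : ∀ x u v : A, ρ x (ρ u v) = 0 := fun x u v => by
    rw [hrho_comm]
    exact hrho_perp _ (hIiso _ (hrho_mem u v)) x
  have homega_rho := omega_rho_comm ω T ρ hskew hT12 hT23 hρ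
  have hleft := mul_mul_eq_brk_brk brk ρ mul hmul hbrk_rho hrho_brk hrho_rho
  have hright := mul_mul_eq_brk_brk' brk ρ mul hmul hanti hrho_comm hbrk_rho hrho_brk hrho_rho
  have hswap := omega_mul_sub_omega_mul_swap brk ω ρ mul hmul hanti hrho_comm
  refine ⟨fun u v w => ?_, fun u v w => ?_, fun u v w => ?_, fun u v w => ?_⟩
  · rw [hleft, hleft, hright, brk_brk_eq_of_jacobi brk hanti hjac]
  · rw [hright, hright, hleft, brk_brk_eq_of_jacobi' brk hanti hjac]
  · linear_combination
      omega_mul_sub_omega_mul brk ω ρ mul hmul hanti hskew hclosed homega_rho u v w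
        - (1/2 : K) * hswap u v w
  · linear_combination omega_mul_sub_omega_mul' brk ω ρ mul hmul hanti hskew hclosed hrho_comm
      homega_rho u v w + (1/2 : K) * hswap u v w
end

section
/- Let (A,[·,·]) be a finite-dimensional Lie algebra over a field K of characteristic zero, and ρ : A×A → A a symmetric bilinear map with values in the center Z(A) such that ρ([u,v],w) = 0 and ρ(ρ(u,v),w) = 0 for all u,v,w. Define u•v := [u,v] + ρ(u,v). Suppose ω is a nondegenerate skew-symmetric bilinear form on A satisfying both ω(u, v•w) − ω(v, u•w) = (1/2)ω(u•v, w) − (1/2)ω(v•u, w) and ω(u, w•v) − ω(v, w•u) = (1/2)ω(v•u, w) − (1/2)ω(u•v, w) for all u,v,w ∈ A. Then: (i) ω([u,v],w) + ω([v,w],u) + ω([w,u],v) = 0 for all u,v,w; (ii) ω(ρ(u,v), w) = ω(ρ(u,w), v) for all u,v,w; and (iii) ω(ρ(u,v), ρ(w,z)) = 0 for all u,v,w,z. -/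
/-- For a Lie algebra `(A, [·,·])`, a symmetric bilinear map `ρ` with
central values satisfying `ρ([u,v],w) = ρ(ρ(u,v),w) = 0`, the product
`u•v = [u,v] + ρ(u,v)`, and a nondegenerate skew-symmetric `ω` satisfying both
symplectic conditions, one has: (i) `ω` is closed on brackets; (ii)
`ω(ρ(u,v), w) = ω(ρ(u,w), v)`; (iii) `ω(ρ(u,v), ρ(w,z)) = 0`. -/
theorem stmt11 {K A : Type*} [Field K] [CharZero K] [AddCommGroup A] [Module K A]
    [FiniteDimensional K A]
    (brk : A →ₗ[K] A →ₗ[K] A)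
    (hanti : ∀ u v : A, brk u v = - brk v u)
    (hjac : ∀ u v w : A, brk (brk u v) w + brk (brk v w) u + brk (brk w u) v = 0)
    (ρ : A →ₗ[K] A →ₗ[K] A)
    (hρsymm : ∀ u v : A, ρ u v = ρ v u)
    (hρcent : ∀ u v w : A, brk (ρ u v) w = 0)
    (hρbrk : ∀ u v w : A, ρ (brk u v) w = 0)
    (hρρ : ∀ u v w : A, ρ (ρ u v) w = 0)
    (mul : A → A → A)
    (hmul : ∀ u v : A, mul u v = brk u v + ρ u v)
    (ω : A →ₗ[K] A →ₗ[K] K)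
    (hskew : ∀ u v : A, ω u v = - ω v u)
    (hnondeg : ∀ u : A, (∀ v : A, ω u v = 0) → u = 0)
    (hsympl : ∀ u v w : A, ω u (mul v w) - ω v (mul u w)
      = (1/2 : K) * ω (mul u v) w - (1/2 : K) * ω (mul v u) w)
    (hsympr : ∀ u v w : A, ω u (mul w v) - ω v (mul w u)
      = (1/2 : K) * ω (mul v u) w - (1/2 : K) * ω (mul u v) w) :
    (∀ u v w : A, ω (brk u v) w + ω (brk v w) u + ω (brk w u) v = 0) ∧
      (∀ u v w : A, ω (ρ u v) w = ω (ρ u w) v) ∧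
      (∀ u v w z : A, ω (ρ u v) (ρ w z) = 0) := by
  -- key identities
  have star : ∀ u v w : A, ω u (ρ v w) = ω v (ρ u w) := by
    intro u v w
    have hL := hsympl u v w
    have hR := hsympr u v w
    simp only [hmul, map_add, LinearMap.add_apply] at hL hR
    rw [hanti w v, hanti w u, hρsymm w v, hρsymm w u] at hR
    rw [hanti v u, hρsymm v u] at hL hR
    simp only [map_neg, LinearMap.neg_apply, map_add, LinearMap.add_apply] at hL hR
    linear_combination (1/2 : K) * hL + (1/2 : K) * hR
  have dstar : ∀ u v w : A, ω u (brk v w) - ω v (brk u w) = ω (brk u v) w := by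
    intro u v w
    have hL := hsympl u v w
    have hR := hsympr u v w
    simp only [hmul, map_add, LinearMap.add_apply] at hL hR
    rw [hanti w v, hanti w u, hρsymm w v, hρsymm w u] at hR
    rw [hanti v u, hρsymm v u] at hL hR
    simp only [map_neg, LinearMap.neg_apply, map_add, LinearMap.add_apply] at hL hR
    linear_combination (1/2 : K) * hL - (1/2 : K) * hR
  refine ⟨?_, ?_, ?_⟩
  · intro u v w
    have h1 := dstar u v w
    have h2 := hskew (brk v w) u
    have h3 := hskew (brk u w) v
    have h4 : ω (brk w u) v = - ω (brk u w) v := by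
      rw [hanti w u]; simp
    linear_combination -h1 + h2 - h3 + h4
  · intro u v w
    have h1 := star w v u
    rw [hρsymm v u] at h1
    have h2 := hskew (ρ u v) w
    have h3 := hskew (ρ u w) v
    rw [hρsymm w u] at h1
    linear_combination -h1 + h2 - h3
  · intro u v w z
    have h1 := star (ρ u v) w z
    rw [hρρ u v z] at h1
    simpa using h1
end

section
/- Let (g,[·,·]) be a finite-dimensional Lie algebra over a field K of characteristic zero, and ω a nondegenerate skew-symmetric bilinear form on g satisfying ω([x,y],z) + ω([y,z],x) + ω([z,x],y) = 0 for all x,y,z. Let ⋆ be the bilinear product determined by ω(a⋆b, c) = −ω(b, [a,c]) for all a,b,c. Let D : g → g be a derivation (D[a,b] = [Da,b] + [a,Db]) and D* : g → g the linear map with ω(D*a, b) = ω(a, Db) for all a,b. Then for all a,b ∈ g: (D + D*)([a,b]) = a⋆(D + D*)b − b⋆(D + D*)a. -/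
/-- In a symplectic Lie algebra `(g, [·,·], ω)` with left symmetric
product `⋆` determined by `ω(a⋆b, c) = −ω(b, [a,c])`, any derivation `D` with
adjoint `D*` (with respect to `ω`) satisfies
`(D + D*)([a,b]) = a⋆(D + D*)b − b⋆(D + D*)a` for all `a, b`. -/
theorem stmt12 {K g : Type*} [Field K] [CharZero K] [AddCommGroup g] [Module K g]
    [FiniteDimensional K g]
    (brk : g →ₗ[K] g →ₗ[K] g)
    (hanti : ∀ a b : g, brk a b = - brk b a)
    (hjac : ∀ a b c : g, brk (brk a b) c + brk (brk b c) a + brk (brk c a) b = 0)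
    (ω : g →ₗ[K] g →ₗ[K] K)
    (hskew : ∀ a b : g, ω a b = - ω b a)
    (hnondeg : ∀ a : g, (∀ b : g, ω a b = 0) → a = 0)
    (hclosed : ∀ a b c : g, ω (brk a b) c + ω (brk b c) a + ω (brk c a) b = 0)
    (star : g →ₗ[K] g →ₗ[K] g)
    (hstar : ∀ a b c : g, ω (star a b) c = - ω b (brk a c))
    (D Dstar : g →ₗ[K] g)
    (hD : ∀ a b : g, D (brk a b) = brk (D a) b + brk a (D b))
    (hDstar : ∀ a b : g, ω (Dstar a) b = ω a (D b)) :
    ∀ a b : g, D (brk a b) + Dstar (brk a b)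
      = star a (D b + Dstar b) - star b (D a + Dstar a) := by
  -- reformulation of the closedness condition
  have key : ∀ x y z : g, ω (brk x y) z = ω x (brk y z) - ω y (brk x z) := by
    intro x y z
    have h1 := hclosed x y z
    have h2 : ω (brk y z) x = - ω x (brk y z) := hskew _ _
    have h3 : ω (brk z x) y = ω y (brk x z) := by
      rw [hanti z x, map_neg, LinearMap.neg_apply, hskew]; ring
    rw [h2, h3] at h1
    linear_combination h1
  intro a b
  rw [← sub_eq_zero]
  apply hnondeg
  intro c
  have e1 : ω (D (brk a b)) c = ω (D a) (brk b c) - ω b (brk (D a) c)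
      + (ω a (brk (D b) c) - ω (D b) (brk a c)) := by
    rw [hD, map_add, LinearMap.add_apply, key (D a) b c, key a (D b) c]
  have e2 : ω (Dstar (brk a b)) c = ω a (brk b (D c)) - ω b (brk a (D c)) := by
    rw [hDstar, key a b (D c)]
  have e3 : ω (star a (D b + Dstar b)) c
      = - ω (D b) (brk a c) - (ω b (brk (D a) c) + ω b (brk a (D c))) := by
    rw [hstar, map_add, LinearMap.add_apply, hDstar, hD, map_add]
    ring
  have e4 : ω (star b (D a + Dstar a)) c
      = - ω (D a) (brk b c) - (ω a (brk (D b) c) + ω a (brk b (D c))) := by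
    rw [hstar, map_add, LinearMap.add_apply, hDstar, hD, map_add]
    ring
  have expand : ω (D (brk a b) + Dstar (brk a b)
      - (star a (D b + Dstar b) - star b (D a + Dstar a))) c
      = ω (D (brk a b)) c + ω (Dstar (brk a b)) c
      - (ω (star a (D b + Dstar b)) c - ω (star b (D a + Dstar a)) c) := by
    simp [map_add, map_sub]
  rw [expand, e1, e2, e3, e4]
  ring
end

section
/- Let A be a vector space over a field K of characteristic zero with a bilinear product • satisfying the left Leibniz identity u•(v•w) = (u•v)•w + v•(u•w), the right Leibniz identity (v•w)•u = (v•u)•w + v•(w•u), and commutativity u•v = v•u for all u,v,w ∈ A. Then u•(v•w) = 0 for all u,v,w ∈ A. -/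
/-- A commutative symmetric Leibniz algebra satisfies
`u•(v•w) = 0` for all `u, v, w`. -/
theorem stmt13 {K A : Type*} [Field K] [CharZero K] [AddCommGroup A] [Module K A]
    (mul : A →ₗ[K] A →ₗ[K] A)
    (hlleib : ∀ u v w : A, mul u (mul v w) = mul (mul u v) w + mul v (mul u w))
    (hrleib : ∀ u v w : A, mul (mul v w) u = mul (mul v u) w + mul v (mul w u))
    (hcomm : ∀ u v : A, mul u v = mul v u) :
    ∀ u v w : A, mul u (mul v w) = 0 := by
  have key : ∀ u v w : A, mul (mul u v) w = 0 := by
    intro u v w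
    have h1 := hlleib u v w
    have h2 := hlleib v u w
    rw [hcomm v u] at h2
    have h3 : mul (mul u v) w + mul (mul u v) w = 0 := by
      have := h1.symm
      rw [h2] at this
      abel_nf at this ⊢
      linear_combination (norm := abel) this
    have h4 : (2 : K) • mul (mul u v) w = 0 := by
      rw [two_smul]; exact h3
    have h5 : (2 : K) ≠ 0 := two_ne_zero
    exact (smul_eq_zero.mp h4).resolve_left h5
  intro u v w
  rw [hcomm u (mul v w), hcomm v w]
  exact key w v u
end

section
/- Let V be a finite-dimensional vector space over a field K of characteristic zero with a nondegenerate skew-symmetric bilinear form ω, let h be a set, and for each X ∈ h let F(X), S(X) ∈ End(V), with F*(X) ∈ End(V) the adjoint of F(X) determined by ω(F*(X)a, b) = ω(a, F(X)b). Set G(X) = S(X) − F(X) and K(X) = (1/2)S(X) − F(X) − F*(X). Assume for all X,Y ∈ h: (a) ω(S(X)a, b) = −ω(a, S(X)b) for all a,b ∈ V; (b) K(Y) ∘ S(X) = 0; (c) G(Y) ∘ S(X) = 0; and (d) F(X)F(Y) − F(Y)F(X) = −(F(X)G(Y) − G(Y)F(X)). Then for all X,Y ∈ h: S(X) ∘ S(Y)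 = 0, F(X) ∘ S(Y) = 0, and S(Y) ∘ F(X) = 0. -/
/-- Let `(V, ω)` be a finite-dimensional symplectic vector space,
`F(X), S(X)` endomorphisms with `F*(X)` the `ω`-adjoint of `F(X)`,
`G(X) = S(X) − F(X)` and `Km(X) = (1/2)S(X) − F(X) − F*(X)`. If each `S(X)` is
`ω`-skew-adjoint, `Km(Y)∘S(X) = 0`, `G(Y)∘S(X) = 0` and
`[F(X), F(Y)] = −[F(X), G(Y)]`, then `S(X)∘S(Y) = F(X)∘S(Y) = S(Y)∘F(X) = 0`. -/
theorem stmt16 {K V h : Type*} [Field K] [CharZero K] [AddCommGroup V] [Module K V]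
    [FiniteDimensional K V]
    (ω : V →ₗ[K] V →ₗ[K] K)
    (hskew : ∀ a b : V, ω a b = - ω b a)
    (hnondeg : ∀ a : V, (∀ b : V, ω a b = 0) → a = 0)
    (F S Fstar G Km : h → V →ₗ[K] V)
    (hFstar : ∀ X : h, ∀ a b : V, ω (Fstar X a) b = ω a (F X b))
    (hG : ∀ X : h, G X = S X - F X)
    (hKm : ∀ X : h, Km X = (1/2 : K) • S X - F X - Fstar X)
    (ha : ∀ X : h, ∀ a b : V, ω (S X a) b = - ω a (S X b))
    (hb : ∀ X Y : h, (Km Y) ∘ₗ (S X) = 0)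
    (hc : ∀ X Y : h, (G Y) ∘ₗ (S X) = 0)
    (hd : ∀ X Y : h, F X ∘ₗ F Y - F Y ∘ₗ F X = -(F X ∘ₗ G Y - G Y ∘ₗ F X)) :
    ∀ X Y : h, S X ∘ₗ S Y = 0 ∧ F X ∘ₗ S Y = 0 ∧ S Y ∘ₗ F X = 0 := by
  -- nondegeneracy in the second argument
  have hnondeg' : ∀ c : V, (∀ a : V, ω a c = 0) → c = 0 := by
    intro c hcz
    apply hnondeg
    intro b
    rw [hskew, hcz, neg_zero]
  -- from (c): S Y ∘ S X = F Y ∘ S X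
  have h1 : ∀ X Y : h, ∀ a : V, S Y (S X a) = F Y (S X a) := by
    intro X Y a
    have := hc X Y
    rw [hG] at this
    have := LinearMap.congr_fun this a
    simpa [sub_eq_zero] using this
  -- from (b): Fstar Y (S X a) = -(1/2) • S Y (S X a)
  have h2 : ∀ X Y : h, ∀ a : V, Fstar Y (S X a) = -((1/2 : K) • S Y (S X a)) := by
    intro X Y a
    have hbb := hb X Y
    rw [hKm] at hbb
    have hbb := LinearMap.congr_fun hbb a
    simp only [LinearMap.comp_apply, LinearMap.sub_apply, LinearMap.smul_apply,
      LinearMap.zero_apply] at hbb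
    rw [h1 X Y a] at hbb ⊢
    rw [sub_eq_zero] at hbb
    rw [← hbb]
    module
  -- key: S X ∘ F Y = (1/2) • (S X ∘ S Y)
  have h4 : ∀ X Y : h, ∀ b : V, S X (F Y b) = (1/2 : K) • S X (S Y b) := by
    intro X Y b
    have key : ∀ a : V, ω a (S X (F Y b) - (1/2 : K) • S X (S Y b)) = 0 := by
      intro a
      have t1 := ha X a (F Y b)
      have t2 := hFstar Y (S X a) b
      have t3 : ω (Fstar Y (S X a)) b = -((1/2 : K) * ω (S Y (S X a)) b) := by
        rw [h2 X Y a]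
        simp
      have t4 := ha Y (S X a) b
      have t5 := ha X a (S Y b)
      rw [map_sub, map_smul, smul_eq_mul]
      linear_combination t1 + t2 - t3 + (1/2 : K) * t4 - (1/2 : K) * t5
    have := hnondeg' _ key
    rwa [sub_eq_zero] at this
  -- from (d): F X ∘ S Y = S Y ∘ F X
  have h5 : ∀ X Y : h, ∀ v : V, F X (S Y v) = S Y (F X v) := by
    intro X Y v
    have hdd := LinearMap.congr_fun (hd X Y) v
    rw [hG] at hdd
    simp only [LinearMap.sub_apply, LinearMap.comp_apply, LinearMap.neg_apply,
      map_sub] at hdd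
    -- hdd : FX(FY v) - FY(FX v) = -((FX(SY v) - FX(FY v)) - (SY(FX v) - FY(FX v)))
    have := sub_eq_zero.mpr hdd
    rw [← sub_eq_zero]
    abel_nf at this ⊢
    linear_combination (norm := abel) this
  -- S X (S Y v) = (1/4) • S X (S Y v)
  have hSS : ∀ X Y : h, ∀ v : V, S X (S Y v) = 0 := by
    intro X Y v
    have e1 : S X (S Y v) = (1/2 : K) • S Y (S X v) := by
      rw [h1 Y X v, h5 X Y v, h4 Y X v]
    have e2 : S Y (S X v) = (1/2 : K) • S X (S Y v) := by
      rw [h1 X Y v, h5 Y X v, h4 X Y v]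
    rw [e2, smul_smul] at e1
    have : (1 - 1/2 * (1/2) : K) • S X (S Y v) = 0 := by
      rw [sub_smul, one_smul, ← e1, sub_self]
    have hne : (1 - 1/2 * (1/2) : K) ≠ 0 := by norm_num
    exact (smul_eq_zero.mp this).resolve_left hne
  intro X Y
  refine ⟨?_, ?_, ?_⟩
  · ext v; simp [hSS]
  · ext v
    have := h1 Y X v
    simp only [LinearMap.comp_apply, LinearMap.zero_apply]
    rw [← this, hSS]
  · ext v
    simp only [LinearMap.comp_apply, LinearMap.zero_apply]
    rw [h4 Y X v, hSS, smul_zero]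
end

section
/- Let h be a finite-dimensional vector space over a field K of characteristic zero and let Ω : h×h×h → K be a map, linear in each argument, satisfying Ω(X,Z,Y) − Ω(Y,Z,X) = (1/2)Ω(X,Y,Z) − (1/2)Ω(Y,X,Z) for all X,Y,Z ∈ h. On A = h ⊕ h*, define the product (X+α)∘(Y+β) = Ω(X,Y,·) ∈ h* (the linear form Z ↦ Ω(X,Y,Z)) and the bilinear form ω_n(X+α, Y+β) = α(Y) − β(X), for X,Y ∈ h and α,β ∈ h*. Then ∘ satisfies the left Leibniz identity u∘(v∘w) = (u∘v)∘w + v∘(u∘w), ω_n is skew-symmetric and nondegenerate, and ω_n(u, v∘w) − ω_n(v, u∘w) = (1/2)ω_n(u∘v, w) − (1/2)ω_n(v∘u, w) for all u,v,w ∈ A; hence (A,∘,ω_n) is a symplectic left Leibniz algebra. -/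
/-- For a trilinear form `Ω` on a finite-dimensional space `h`
satisfying `Ω(X,Z,Y) − Ω(Y,Z,X) = (1/2)Ω(X,Y,Z) − (1/2)Ω(Y,X,Z)`, the space
`A = h ⊕ h*` with product `(X+α)∘(Y+β) = Ω(X,Y,·)` and form
`ω_n(X+α, Y+β) = α(Y) − β(X)` is a symplectic left Leibniz algebra. -/
theorem stmt17 {K h : Type*} [Field K] [CharZero K] [AddCommGroup h] [Module K h]
    [FiniteDimensional K h]
    (Ω : h →ₗ[K] h →ₗ[K] h →ₗ[K] K)
    (hΩ : ∀ X Y Z : h, Ω X Z Y - Ω Y Z X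
      = (1/2 : K) * Ω X Y Z - (1/2 : K) * Ω Y X Z)
    (mul : (h × Module.Dual K h) → (h × Module.Dual K h) → (h × Module.Dual K h))
    (hmul : ∀ p q : h × Module.Dual K h, mul p q = (0, Ω p.1 q.1))
    (ωn : (h × Module.Dual K h) → (h × Module.Dual K h) → K)
    (hωn : ∀ p q : h × Module.Dual K h, ωn p q = p.2 q.1 - q.2 p.1) :
    (∀ u v w : h × Module.Dual K h,
        mul u (mul v w) = mul (mul u v) w + mul v (mul u w)) ∧
      (∀ u v : h × Module.Dual K h, ωn u v = - ωn v u) ∧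
      (∀ u : h × Module.Dual K h, (∀ v : h × Module.Dual K h, ωn u v = 0) → u = 0) ∧
      (∀ u v w : h × Module.Dual K h, ωn u (mul v w) - ωn v (mul u w)
        = (1/2 : K) * ωn (mul u v) w - (1/2 : K) * ωn (mul v u) w) := by
  refine ⟨?_, ?_, ?_, ?_⟩
  · intro u v w
    simp only [hmul, map_zero, LinearMap.zero_apply, Prod.mk_add_mk, add_zero]
  · intro u v
    simp only [hωn]; ring
  · intro u hu
    have h2 : u.2 = 0 := by
      ext x
      have := hu (x, 0)
      simpa [hωn] using this
    have h1 : u.1 = 0 := by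
      rw [← Module.forall_dual_apply_eq_zero_iff K]
      intro φ
      have := hu (0, φ)
      simp [hωn, h2] at this
      simpa using this
    exact Prod.ext h1 h2
  · intro u v w
    simp only [hmul, hωn]
    simp only [map_zero, LinearMap.zero_apply]
    have := hΩ u.1 v.1 w.1
    linear_combination this
end

section
/- Let A be a 2-dimensional vector space over a field K of characteristic zero, • a bilinear product on A satisfying the left Leibniz identity u•(v•w) = (u•v)•w + v•(u•w), and ω a nondegenerate skew-symmetric bilinear form on A satisfying ω(u, v•w) − ω(v, u•w) = (1/2)ω(u•v, w) − (1/2)ω(v•u, w) for all u,v,w. Suppose • is not anticommutative, i.e., u•v + v•u ≠ 0 for some u,v ∈ A. Then there exists a basis (e₁, e₂) of A such that e₁•e₁ = e₁•e₂ = e₂•e₁ = 0 and e₂•e₂ = e₁. -/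
/-!
The Leibniz identity with `u = v` shows that every square, hence by polarization every
`s = u•v + v•u`, annihilates from the left; choose such an `s ≠ 0` and, by nondegeneracy,
`t` with `ω(s, t) ≠ 0`, so that `(s, t)` is a basis. In dimension two the `ω`-orthogonal of
`s` is `K s`. The symplectic identity at `(t, s, s)` puts `t•s` there, and the Leibniz identity
at `(t, t, t)` forces the `t`-coordinate `d` of `t•t` to satisfy `d² = 0`, so `t•t = c s`.
The symplectic identity at `(t, s, t)` then gives `t•s = 0`, and `c ≠ 0` because the product
is not identically zero. The basis is `(c s, t)`.
-/

section Leibniz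

variable {R A : Type*} [CommRing R] [AddCommGroup A] [Module R A]

namespace IsLeftLeibniz

variable {mul : A →ₗ[R] A →ₗ[R] A}

theorem mul_self_mul (hleib : IsLeftLeibniz mul) (x w : A) : mul (mul x x) w = 0 :=
  right_eq_add.mp (hleib x x w)

theorem mul_add_mul_swap_mul (hleib : IsLeftLeibniz mul) (u v w : A) :
    mul (mul u v + mul v u) w = 0 := by
  have h := hleib.mul_self_mul (u + v) w
  simp only [map_add, LinearMap.add_apply, hleib.mul_self_mul, zero_add, add_zero] at h
  rwa [map_add, LinearMap.add_apply, add_comm]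

end IsLeftLeibniz

end Leibniz

section Form

variable {K A : Type*} [Field K] [AddCommGroup A] [Module K A] (ω : A →ₗ[K] A →ₗ[K] K)
  {s t : A}

theorem linearIndependent_pair_of_apply_ne_zero (hss : ω s s = 0) (hst : ω s t ≠ 0) :
    LinearIndependent K ![s, t] := by
  refine LinearIndependent.pair_iff.mpr fun a b hab => ?_
  have hb : b = 0 := by
    have h := congrArg (ω s) hab
    simp only [map_add, map_smul, smul_eq_mul, hss, mul_zero, zero_add, map_zero] at h
    exact (mul_eq_zero.mp h).resolve_right hst
  subst hb
  have hs : s ≠ 0 := by rintro rfl; simp at hst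
  simp only [zero_smul, add_zero, smul_eq_zero] at hab
  exact ⟨hab.resolve_right hs, rfl⟩

theorem span_pair_eq_top_of_finrank_eq_two (hdim : Module.finrank K A = 2)
    (hind : LinearIndependent K ![s, t]) : Submodule.span K {s, t} = ⊤ := by
  simpa [Matrix.range_cons, Matrix.range_empty, Set.pair_comm] using
    hind.span_eq_top_of_card_eq_finrank (by simp [hdim])

theorem exists_smul_eq_of_apply_eq_zero (hspan : Submodule.span K {s, t} = ⊤)
    (hss : ω s s = 0) (hst : ω s t ≠ 0) {x : A} (hx : ω s x = 0) : ∃ a : K, a • s = x := by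
  obtain ⟨a, b, rfl⟩ := Submodule.mem_span_pair.mp (hspan ▸ Submodule.mem_top : x ∈ _)
  simp only [map_add, map_smul, smul_eq_mul, hss, mul_zero, zero_add] at hx
  obtain rfl := (mul_eq_zero.mp hx).resolve_right hst
  exact ⟨a, by simp⟩

theorem mul_eq_zero_of_span_pair {mul : A →ₗ[K] A →ₗ[K] A}
    (hspan : Submodule.span K {s, t} = ⊤) (hss : mul s s = 0) (hst : mul s t = 0)
    (hts : mul t s = 0) (htt : mul t t = 0) : mul = 0 := by
  refine LinearMap.ext_on hspan fun x hx => LinearMap.ext_on hspan fun y hy => ?_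
  rcases hx with rfl | rfl <;> rcases hy with rfl | rfl <;> simp [*]

end Form

section Symplectic

variable {K A : Type*} [Field K] [AddCommGroup A] [Module K A]

def SymplecticIdentity (mul : A →ₗ[K] A →ₗ[K] A) (ω : A →ₗ[K] A →ₗ[K] K) : Prop :=
  ∀ u v w : A, ω u (mul v w) - ω v (mul u w)
    = (1/2 : K) * ω (mul u v) w - (1/2 : K) * ω (mul v u) w

variable {mul : A →ₗ[K] A →ₗ[K] A} {ω : A →ₗ[K] A →ₗ[K] K} {s t : A}

theorem apply_mul_eq_zero_of_left_annihilator [CharZero K] (hsymp : SymplecticIdentity mul ω)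
    (hskew : ∀ u v : A, ω u v = - ω v u) (hs : ∀ w, mul s w = 0) (t : A) :
    ω s (mul t s) = 0 := by
  have h := hsymp t s s
  rw [hs, hs, hskew (mul t s)] at h
  simp only [map_zero, LinearMap.zero_apply] at h
  linear_combination -2 * h

theorem apply_mul_self_eq_zero_of_left_annihilator (hleib : IsLeftLeibniz mul)
    (hs : ∀ w, mul s w = 0) (hspan : Submodule.span K {s, t} = ⊤)
    (hss : ω s s = 0) (hst : ω s t ≠ 0) : ω s (mul t t) = 0 := by
  obtain ⟨c, d, htt⟩ := Submodule.mem_span_pair.mp (hspan ▸ Submodule.mem_top : mul t t ∈ _)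
  have hωtt : ω s (mul t t) = d * ω s t := by
    simp [← htt, hss]
  have hd : d • mul t t = 0 := by
    have h := hleib.mul_self_mul t t
    rwa [← htt, map_add, map_smul, map_smul, LinearMap.add_apply, LinearMap.smul_apply,
      LinearMap.smul_apply, hs, smul_zero, zero_add] at h
  have hdd : d * d * ω s t = 0 := by
    simpa [hωtt, mul_assoc] using congrArg (ω s) hd
  rw [hωtt, mul_self_eq_zero.mp ((mul_eq_zero.mp hdd).resolve_right hst), zero_mul]

theorem mul_eq_zero_and_exists_smul_eq_mul_self [CharZero K] (hleib : IsLeftLeibniz mul)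
    (hsymp : SymplecticIdentity mul ω) (hskew : ∀ u v : A, ω u v = - ω v u)
    (hs : ∀ w, mul s w = 0) (hspan : Submodule.span K {s, t} = ⊤)
    (hss : ω s s = 0) (hst : ω s t ≠ 0) : mul t s = 0 ∧ ∃ c : K, c • s = mul t t := by
  obtain ⟨a, hts⟩ := exists_smul_eq_of_apply_eq_zero ω hspan hss hst
    (apply_mul_eq_zero_of_left_annihilator hsymp hskew hs t)
  obtain ⟨c, htt⟩ := exists_smul_eq_of_apply_eq_zero ω hspan hss hst
    (apply_mul_self_eq_zero_of_left_annihilator hleib hs hspan hss hst)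
  refine ⟨?_, c, htt⟩
  have h := hsymp t s t
  rw [hs, ← hts, ← htt] at h
  simp only [map_zero, LinearMap.zero_apply, map_smul, LinearMap.smul_apply, smul_eq_mul,
    hss, mul_zero, sub_zero] at h
  have ha : a = 0 := by
    have h' : a * ω s t = 0 := by linear_combination -2 * h
    exact (mul_eq_zero.mp h').resolve_right hst
  rw [← hts, ha, zero_smul]

end Symplectic

theorem stmt18_general {K A : Type*} [Field K] [CharZero K] [AddCommGroup A] [Module K A]
    (hdim : Module.finrank K A = 2)
    (mul : A →ₗ[K] A →ₗ[K] A) (ω : A →ₗ[K] A →ₗ[K] K)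
    (hleib : ∀ u v w : A, mul u (mul v w) = mul (mul u v) w + mul v (mul u w))
    (hskew : ∀ u v : A, ω u v = - ω v u)
    (hnondeg : ∀ u : A, (∀ v : A, ω u v = 0) → u = 0)
    (hsymp : ∀ u v w : A, ω u (mul v w) - ω v (mul u w)
      = (1/2 : K) * ω (mul u v) w - (1/2 : K) * ω (mul v u) w)
    (hnotlie : ∃ u v : A, mul u v + mul v u ≠ 0) :
    ∃ e₁ e₂ : A, LinearIndependent K ![e₁, e₂] ∧
      Submodule.span K {e₁, e₂} = ⊤ ∧
      mul e₁ e₁ = 0 ∧ mul e₁ e₂ = 0 ∧ mul e₂ e₁ = 0 ∧ mul e₂ e₂ = e₁ := by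
  obtain ⟨u, v, hs₀⟩ := hnotlie
  set s := mul u v + mul v u
  have hs : ∀ w, mul s w = 0 := IsLeftLeibniz.mul_add_mul_swap_mul hleib u v
  obtain ⟨t, hst⟩ : ∃ t, ω s t ≠ 0 := by
    by_contra! h
    exact hs₀ (hnondeg s h)
  have hss : ω s s = 0 := by linear_combination hskew s s / 2
  have hspan := span_pair_eq_top_of_finrank_eq_two hdim
    (linearIndependent_pair_of_apply_ne_zero ω hss hst)
  obtain ⟨hts, c, htt⟩ :=
    mul_eq_zero_and_exists_smul_eq_mul_self hleib hsymp hskew hs hspan hss hst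
  have hc : c ≠ 0 := by
    rintro rfl
    rw [zero_smul] at htt
    have hmul := mul_eq_zero_of_span_pair hspan (hs s) (hs t) hts htt.symm
    exact hs₀ (by simp [s, hmul])
  have hcss : ω (c • s) (c • s) = 0 := by simp [hss]
  have hcst : ω (c • s) t ≠ 0 := by simpa [hc] using hst
  have hind := linearIndependent_pair_of_apply_ne_zero ω hcss hcst
  exact ⟨c • s, t, hind, span_pair_eq_top_of_finrank_eq_two hdim hind,
    by simp [hs], by simp [hs], by simp [hts], by simp [htt]⟩

/-- A 2-dimensional symplectic left Leibniz algebra which is not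
anticommutative has a basis `(e₁, e₂)` with `e₁•e₁ = e₁•e₂ = e₂•e₁ = 0` and
`e₂•e₂ = e₁`. -/
theorem stmt18 {K A : Type*} [Field K] [CharZero K] [AddCommGroup A] [Module K A]
    [FiniteDimensional K A] (hdim : Module.finrank K A = 2)
    (mul : A →ₗ[K] A →ₗ[K] A) (ω : A →ₗ[K] A →ₗ[K] K)
    (hleib : ∀ u v w : A, mul u (mul v w) = mul (mul u v) w + mul v (mul u w))
    (hskew : ∀ u v : A, ω u v = - ω v u)
    (hnondeg : ∀ u : A, (∀ v : A, ω u v = 0) → u = 0)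
    (hsymp : ∀ u v w : A, ω u (mul v w) - ω v (mul u w)
      = (1/2 : K) * ω (mul u v) w - (1/2 : K) * ω (mul v u) w)
    (hnotlie : ∃ u v : A, mul u v + mul v u ≠ 0) :
    ∃ e₁ e₂ : A, LinearIndependent K ![e₁, e₂] ∧
      Submodule.span K {e₁, e₂} = ⊤ ∧
      mul e₁ e₁ = 0 ∧ mul e₁ e₂ = 0 ∧ mul e₂ e₁ = 0 ∧ mul e₂ e₂ = e₁ :=
  stmt18_general hdim mul ω hleib hskew hnondeg hsymp hnotlie
end
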